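/- Let R be a commutative Noetherian local ring and let B and C be semidualizing R-modules. Then for every prime ideal p of R such that the localization R_p is Cohen–Macaulay (for example, every minimal prime of R), the localized module (Hom_R(B,C))_p is nonzero; in particular, Hom_R(B,C) ≠ 0. -/

import Mathlib

open CategoryTheory TensorProduct

universe u

/-- `Ext_R^n(M, N) = 0`. -/
def ExtVanish (R : Type u) [CommRing R] (M N : Type u) [AddCommGroup M] [Module R M]
    [AddCommGroup N] [Module R N] (n : ℕ) : Prop :=
  Subsingleton (((Ext R (ModuleCat.{u} R) n).obj (Opposite.op (ModuleCat.of R M))).obj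
    (ModuleCat.of R N))

/-- `Tor^R_n(M, N) = 0`. -/
def TorVanish (R : Type u) [CommRing R] (M N : Type u) [AddCommGroup M] [Module R M]
    [AddCommGroup N] [Module R N] (n : ℕ) : Prop :=
  Subsingleton (((Tor (ModuleCat.{u} R) n).obj (ModuleCat.of R M)).obj (ModuleCat.of R N))

/-- A semidualizing `R`-module: finitely generated, the homothety map
`R → Hom_R(C,C)` is bijective, and `Ext_R^n(C,C) = 0` for all `n ≥ 1`. -/
def IsSemidualizing (R : Type u) [CommRing R] (C : Type u) [AddCommGroup C] [Module R C] :
    Prop :=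
  Module.Finite R C ∧ Function.Bijective (LinearMap.lsmul R C) ∧
    ∀ n : ℕ, 1 ≤ n → ExtVanish R C C n

/-- The biduality map `X → Hom_R(Hom_R(X,C),C)`, `x ↦ (f ↦ f x)`. -/
noncomputable def bidualityMap (R : Type u) [CommRing R] (C X : Type u) [AddCommGroup C]
    [Module R C] [AddCommGroup X] [Module R X] : X →ₗ[R] ((X →ₗ[R] C) →ₗ[R] C) :=
  (LinearMap.id : (X →ₗ[R] C) →ₗ[R] (X →ₗ[R] C)).flip

/-- `X` is totally `C`-reflexive. -/
def IsTotallyReflexive (R : Type u) [CommRing R] (C X : Type u) [AddCommGroup C] [Module R C]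
    [AddCommGroup X] [Module R X] : Prop :=
  (∀ n : ℕ, 1 ≤ n → ExtVanish R X C n) ∧
  (∀ n : ℕ, 1 ≤ n → ExtVanish R (X →ₗ[R] C) C n) ∧
  Function.Bijective (bidualityMap R C X)

/-- `X` belongs to the Bass class `B_B(R)`. -/
def MemBassClass (R : Type u) [CommRing R] (B X : Type u) [AddCommGroup B] [Module R B]
    [AddCommGroup X] [Module R X] : Prop :=
  (∀ n : ℕ, 1 ≤ n → ExtVanish R B X n) ∧
  (∀ n : ℕ, 1 ≤ n → TorVanish R B (B →ₗ[R] X) n) ∧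
  Function.Bijective
    (TensorProduct.lift ((LinearMap.id : (B →ₗ[R] X) →ₗ[R] (B →ₗ[R] X)).flip) :
      B ⊗[R] (B →ₗ[R] X) →ₗ[R] X)

/-- `X` belongs to the Auslander class `A_C(R)`. -/
def MemAuslanderClass (R : Type u) [CommRing R] (C X : Type u) [AddCommGroup C] [Module R C]
    [AddCommGroup X] [Module R X] : Prop :=
  (∀ n : ℕ, 1 ≤ n → TorVanish R C X n) ∧
  (∀ n : ℕ, 1 ≤ n → ExtVanish R C (C ⊗[R] X) n) ∧
  Function.Bijective ((TensorProduct.mk R C X).flip : X →ₗ[R] (C →ₗ[R] C ⊗[R] X))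

/-- `M` has finite projective dimension over `R`: for some `n`, `Ext_R^i(M,-)` vanishes
for all `i > n`. -/
def HasFinProjDim (R : Type u) [CommRing R] (M : Type u) [AddCommGroup M] [Module R M] :
    Prop :=
  ∃ n : ℕ, ∀ (N : Type u) [AddCommGroup N] [Module R N], ∀ i : ℕ, n < i → ExtVanish R M N i

/-- `M` has finite injective dimension over `R`: for some `n`, `Ext_R^i(-,M)` vanishes
for all `i > n`. -/
def HasFinInjDim (R : Type u) [CommRing R] (M : Type u) [AddCommGroup M] [Module R M] :
    Prop :=
  ∃ n : ℕ, ∀ (N : Type u) [AddCommGroup N] [Module R N], ∀ i : ℕ, n < i → ExtVanish R N M i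

/-- A dualizing `R`-module: semidualizing of finite injective dimension. -/
def IsDualizingModule (R : Type u) [CommRing R] (D : Type u) [AddCommGroup D] [Module R D] :
    Prop :=
  IsSemidualizing R D ∧ HasFinInjDim R D

/-- An invertible `R`-module: finitely generated projective, locally free of rank one. -/
def IsInvertibleModule (R : Type u) [CommRing R] (P : Type u) [AddCommGroup P] [Module R P] :
    Prop :=
  Module.Finite R P ∧ Module.Projective R P ∧
    ∀ (m : Ideal R) (hm : m.IsMaximal),
      haveI := hm.isPrime
      Nonempty ((LocalizedModule m.primeCompl P) ≃ₗ[Localization m.primeCompl]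
        (Localization m.primeCompl))

/-- There is a quasi-deformation `R → R' ← Q` such that `R' ⊗_R M` has finite projective
dimension over `Q`. -/
def ExistsQuasiDefProjDim (R : Type u) [CommRing R] [IsLocalRing R]
    (M : Type u) [AddCommGroup M] [Module R M] : Prop :=
  ∃ (R' : Type u) (Q : Type u) (cR' : CommRing R') (cQ : CommRing Q),
    letI := cR'
    letI := cQ
    ∃ (_ : IsLocalRing R') (_ : IsLocalRing Q) (_ : IsNoetherianRing R')
      (_ : IsNoetherianRing Q) (φ : R →+* R') (ρ : Q →+* R'),
      IsLocalHom φ ∧ IsLocalHom ρ ∧ φ.Flat ∧ Function.Surjective ρ ∧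
      (∃ rs : List Q, RingTheory.Sequence.IsRegular Q rs ∧
        RingHom.ker ρ = Ideal.span {a | a ∈ rs}) ∧
      (letI := φ.toAlgebra
       letI : Module Q (R' ⊗[R] M) := Module.compHom (R' ⊗[R] M) ρ
       HasFinProjDim Q (R' ⊗[R] M))

/-- There is a quasi-deformation `R → R' ← Q` such that `R' ⊗_R M` has finite injective
dimension over `Q`. -/
def ExistsQuasiDefInjDim (R : Type u) [CommRing R] [IsLocalRing R]
    (M : Type u) [AddCommGroup M] [Module R M] : Prop :=
  ∃ (R' : Type u) (Q : Type u) (cR' : CommRing R') (cQ : CommRing Q),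
    letI := cR'
    letI := cQ
    ∃ (_ : IsLocalRing R') (_ : IsLocalRing Q) (_ : IsNoetherianRing R')
      (_ : IsNoetherianRing Q) (φ : R →+* R') (ρ : Q →+* R'),
      IsLocalHom φ ∧ IsLocalHom ρ ∧ φ.Flat ∧ Function.Surjective ρ ∧
      (∃ rs : List Q, RingTheory.Sequence.IsRegular Q rs ∧
        RingHom.ker ρ = Ideal.span {a | a ∈ rs}) ∧
      (letI := φ.toAlgebra
       letI : Module Q (R' ⊗[R] M) := Module.compHom (R' ⊗[R] M) ρ
       HasFinInjDim Q (R' ⊗[R] M))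

/-- `E` is an injective hull (injective envelope) of `M` over `R`: `E` is injective and
contains a copy of `M` as an essential submodule. -/
def IsInjectiveHull (R : Type u) [CommRing R] (M E : Type u) [AddCommGroup M] [Module R M]
    [AddCommGroup E] [Module R E] : Prop :=
  Module.Injective R E ∧ ∃ f : M →ₗ[R] E, Function.Injective f ∧
    ∀ N : Submodule R E, N ≠ ⊥ → N ⊓ LinearMap.range f ≠ ⊥

/-- There is an invertible `R`-module `P` with `B ≅ P ⊗_R C`. -/
def ExistsInvertibleFactor (R : Type u) [CommRing R] (B C : Type u) [AddCommGroup B]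
    [Module R B] [AddCommGroup C] [Module R C] : Prop :=
  ∃ (P : Type u) (aP : AddCommGroup P),
    letI := aP
    ∃ (mP : Module R P),
      letI := mP
      IsInvertibleModule R P ∧ Nonempty (B ≃ₗ[R] P ⊗[R] C)

/-- The depth of a local ring `A`: the least `n` such that `Ext_A^n(k, A) ≠ 0`,
where `k` is the residue field. -/
noncomputable def localRingDepth (A : Type u) [CommRing A] [IsLocalRing A] : ℕ∞ :=
  sInf {n : ℕ∞ | ∃ m : ℕ, n = m ∧ ¬ ExtVanish A (IsLocalRing.ResidueField A) A m}

/-- A Noetherian local ring is Cohen–Macaulay if its depth equals its Krull dimension. -/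
def IsCohenMacaulayLocalRing (A : Type u) [CommRing A] [IsLocalRing A] : Prop :=
  ringKrullDim A = (localRingDepth A : WithBot ℕ∞)

/-- A Noetherian local ring is Gorenstein if it has finite injective dimension as a module
over itself. -/
def IsGorensteinLocalRing (A : Type u) [CommRing A] [IsLocalRing A] : Prop :=
  HasFinInjDim A A

/-!
A semidualizing module is finitely generated and faithful, and faithfulness of a finitely
generated module survives localization at a prime. Over a Noetherian ring, `Hom(M, N) = 0` for
finite `M`, `N` exactly when `Ann M` contains an `N`-regular element; when `M` is faithful that
element is `0`, which is `N`-regular only if `N = 0`. Since `Hom` of a finitely presented module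
commutes with localization, `Hom(B, C)_p = Hom(B_p, C_p) ≠ 0` for every prime `p`.
-/

section Faithful

variable {A : Type u} [CommRing A] {M N : Type u} [AddCommGroup M] [Module A M]
  [AddCommGroup N] [Module A N]

lemma faithfulSMul_of_injective_lsmul (h : Function.Injective (LinearMap.lsmul A M)) :
    FaithfulSMul A M :=
  ⟨fun hr ↦ h (LinearMap.ext hr)⟩

lemma Module.mem_support_of_faithfulSMul [Module.Finite A M] [FaithfulSMul A M]
    (p : PrimeSpectrum A) : p ∈ Module.support A M := by
  rw [Module.mem_support_iff_of_finite, Module.annihilator_eq_bot.mpr ‹_›]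
  exact bot_le

lemma faithfulSMul_localizedModule [Module.Finite A M] [FaithfulSMul A M]
    (p : Ideal A) [p.IsPrime] :
    FaithfulSMul (Localization.AtPrime p) (LocalizedModule p.primeCompl M) := by
  rw [← Module.annihilator_eq_bot, eq_bot_iff]
  intro z hz
  induction z using Localization.induction_on with | H as
  obtain ⟨a, s⟩ := as
  -- `a / s` kills `M_p`, so `(a • M)_p = 0`; as `a • M` is finite, some `t ∉ p` kills it.
  let aM := LinearMap.range (LinearMap.lsmul A M a)
  have h_not_mem : (⟨p, ‹_›⟩ : PrimeSpectrum A) ∉ Module.support A aM := by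
    rw [Module.notMem_support_iff']
    rintro ⟨_, m, rfl⟩
    have hm := Module.mem_annihilator.mp hz (LocalizedModule.mk m 1)
    rw [LocalizedModule.mk_smul_mk, ← LocalizedModule.zero_mk (s * 1),
      LocalizedModule.mk_eq] at hm
    obtain ⟨⟨r, hr⟩, hr0⟩ := hm
    exact ⟨r * s, p.primeCompl.mul_mem hr s.2,
      Subtype.ext (by simpa [mul_smul, Submonoid.smul_def] using hr0)⟩
  obtain ⟨t, ht, htp⟩ := SetLike.not_le_iff_exists.mp
    (mt Module.mem_support_iff_of_finite.mpr h_not_mem)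
  have hta : t * a = 0 := by
    refine (Module.annihilator_eq_bot.mpr ‹_›).le (Module.mem_annihilator.mpr fun m ↦ ?_)
    rw [mul_smul]
    exact congrArg Subtype.val (Module.mem_annihilator.mp ht ⟨a • m, m, rfl⟩)
  rw [Ideal.mem_bot, Localization.mk_eq_mk'_apply, IsLocalization.mk'_eq_zero_iff]
  exact ⟨⟨t, htp⟩, hta⟩

lemma nontrivial_linearMap_of_faithfulSMul [IsNoetherianRing A] [Module.Finite A M]
    [Module.Finite A N] [FaithfulSMul A M] [Nontrivial N] : Nontrivial (M →ₗ[A] N) := by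
  rw [← not_subsingleton_iff_nontrivial, IsSMulRegular.subsingleton_linearMap_iff,
    Module.annihilator_eq_bot.mpr ‹_›]
  rintro ⟨r, hr, hreg⟩
  rw [Ideal.mem_bot] at hr
  exact IsSMulRegular.not_zero_iff.mpr ‹_› (hr ▸ hreg)

lemma nontrivial_localizedModule_linearMap [IsNoetherianRing A] [Module.Finite A M]
    [Module.Finite A N] [FaithfulSMul A M] [FaithfulSMul A N] (p : Ideal A) [p.IsPrime] :
    Nontrivial (LocalizedModule p.primeCompl (M →ₗ[A] N)) := by
  have := faithfulSMul_localizedModule (M := M) p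
  have : Nontrivial (LocalizedModule p.primeCompl N) :=
    Module.mem_support_iff.mp (Module.mem_support_of_faithfulSMul (M := N) ⟨p, ‹_›⟩)
  have := Module.finitePresentation_of_finite A M
  have := nontrivial_linearMap_of_faithfulSMul (A := Localization.AtPrime p)
    (M := LocalizedModule p.primeCompl M) (N := LocalizedModule p.primeCompl N)
  exact (Module.FinitePresentation.linearEquivMapExtendScalars p.primeCompl).nontrivial

end Faithful

theorem IsSemidualizing.faithfulSMul {R : Type u} [CommRing R] {C : Type u} [AddCommGroup C]
    [Module R C] (hC : IsSemidualizing R C) : FaithfulSMul R C :=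
  faithfulSMul_of_injective_lsmul hC.2.1.injective

/-- Proposition 7.2(a): Over a Noetherian local ring, for semidualizing
modules `B`, `C` and every prime `p` with `R_p` Cohen–Macaulay, `(Hom(B,C))_p ≠ 0`;
in particular `Hom(B,C) ≠ 0`. -/
theorem statement15 (R : Type u) [CommRing R] [IsNoetherianRing R] [IsLocalRing R]
    (B C : Type u) [AddCommGroup B] [Module R B] [AddCommGroup C] [Module R C]
    (hB : IsSemidualizing R B) (hC : IsSemidualizing R C) :
    (∀ (p : Ideal R) [p.IsPrime],
      IsCohenMacaulayLocalRing (Localization.AtPrime p) →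
        Nontrivial (LocalizedModule p.primeCompl (B →ₗ[R] C))) ∧
    Nontrivial (B →ₗ[R] C) := by
  have := hB.1
  have := hC.1
  have := hB.faithfulSMul
  have := hC.faithfulSMul
  have : Nontrivial C := Module.nonempty_support_iff.mp
    ⟨⟨IsLocalRing.maximalIdeal R, inferInstance⟩, Module.mem_support_of_faithfulSMul _⟩
  exact ⟨fun p _ _ ↦ nontrivial_localizedModule_linearMap p,
    nontrivial_linearMap_of_faithfulSMul⟩
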